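/- arXiv:1310.0371 — 2 statements merged into one kernel-verified Lean document; each statement's English description precedes it below -/
import Mathlib

section
/- Let x ∈ ℝ², let F and O be finite index sets with points p : F → ℝ² and o : O → ℝ², and assume x ≠ p j and ‖x − p j‖ ≠ R_s for every j ∈ F, and x ≠ o k for every k ∈ O. Then the function β : ℝ² → ℝ given by β(y) = (∏_{j∈F} b(‖y − p j‖)) · (∏_{k∈O} B(‖y − o k‖)) is differentiable at x, and its gradient satisfies ‖∇β(x)‖ ≤ |F| · (2/δ₂) + |O| · (2/δ₁). -/
open Finset

/-- The connectivity constraint function `b` from the paper. -/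
noncomputable def bfun (Rs δ₂ : ℝ) (d : ℝ) : ℝ :=
  if d < Rs - δ₂ then 1
  else if d ≤ Rs then -(1/δ₂^2) * (d + 2*δ₂ - Rs)^2 + (2/δ₂) * (d + 2*δ₂ - Rs)
  else 0

/-- The collision constraint function `B` from the paper. -/
noncomputable def Bfun (δ₁ : ℝ) (d : ℝ) : ℝ :=
  if d ≤ δ₁ then -d^2/δ₁^2 + 2*d/δ₁ else 1

/-! Both constraint functions have the form `1 - (max u 0) ^ 2` with `u` affine in the distance,
of slope `±1/δ`, and `u ≤ 1` on the relevant range (for `b` only up to `d = R_s`; beyond it `b = 0`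
and the derivative of `b` jumps at `R_s`). Since `(max u 0) ^ 2` is `C¹`, this gives values in
`[-1, 1]` and a derivative of absolute value at most `2/δ`. Distances to fixed points are
`1`-Lipschitz, so each factor of `β` has gradient norm at most `2/δ`, and the product rule, with all
other factors bounded by `1`, adds these bounds. -/

open Set Filter Topology

lemma hasDerivAt_max_zero_sq (t : ℝ) :
    HasDerivAt (fun s : ℝ => max s 0 ^ 2) (2 * max t 0) t := by
  have left : ∀ t ≤ 0, HasDerivWithinAt (fun s : ℝ => max s 0 ^ 2) 0 (Iic 0) t := fun t ht =>
    (hasDerivWithinAt_const t _ 0).congr (fun s hs => by simp [max_eq_right (mem_Iic.mp hs)])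
      (by simp [max_eq_right ht])
  have right : ∀ t ≥ 0, HasDerivWithinAt (fun s : ℝ => max s 0 ^ 2) (2 * t) (Ici 0) t :=
    fun t ht => by
      simpa using ((hasDerivAt_pow 2 t).hasDerivWithinAt (s := Ici 0)).congr
        (fun s hs => by simp [max_eq_left (mem_Ici.mp hs)]) (by simp [max_eq_left ht])
  rcases lt_trichotomy t 0 with h | rfl | h
  · simpa [max_eq_right h.le] using (left t h.le).hasDerivAt (Iic_mem_nhds h)
  · have := (left 0 le_rfl).union (by simpa using right 0 le_rfl)
    simpa [Iic_union_Ici] using this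
  · simpa [max_eq_left h.le] using (right t h.le).hasDerivAt (Ici_mem_nhds h)

lemma exists_hasDerivAt_one_sub_max_zero_sq_affine {a b t : ℝ} (ht : a * t + b ≤ 1) :
    ∃ g', HasDerivAt (fun s => 1 - max (a * s + b) 0 ^ 2) g' t ∧ |g'| ≤ 2 * |a| := by
  have hu : HasDerivAt (fun s => a * s + b) a t := by
    simpa using ((hasDerivAt_id t).const_mul a).add_const b
  refine ⟨_, ((hasDerivAt_max_zero_sq _).comp t hu).const_sub 1, ?_⟩
  have h0 : 0 ≤ max (a * t + b) 0 := le_max_right _ _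
  have h1 : max (a * t + b) 0 ≤ 1 := max_le ht zero_le_one
  rw [abs_neg, abs_mul, abs_mul, abs_two, abs_of_nonneg h0]
  nlinarith [abs_nonneg a]

lemma abs_one_sub_max_zero_sq_le {u : ℝ} (hu : u ≤ 1) : |1 - max u 0 ^ 2| ≤ 1 := by
  have h0 : 0 ≤ max u 0 := le_max_right _ _
  have h1 : max u 0 ≤ 1 := max_le hu zero_le_one
  rw [abs_le]
  constructor <;> nlinarith

lemma Bfun_eq {δ₁ : ℝ} (hδ₁ : 0 < δ₁) (d : ℝ) :
    Bfun δ₁ d = 1 - max (-δ₁⁻¹ * d + 1) 0 ^ 2 := by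
  have hu : -δ₁⁻¹ * d + 1 = (δ₁ - d) / δ₁ := by field_simp; ring
  rw [hu, Bfun]
  rcases le_or_gt d δ₁ with h | h
  · rw [if_pos h, max_eq_left (div_nonneg (by linarith) hδ₁.le)]
    field_simp
    ring
  · rw [if_neg (not_le.mpr h), max_eq_right (div_nonpos_of_nonpos_of_nonneg (by linarith) hδ₁.le)]
    simp

lemma bfun_eq_of_le {Rs δ₂ d : ℝ} (hδ₂ : 0 < δ₂) (hd : d ≤ Rs) :
    bfun Rs δ₂ d = 1 - max (δ₂⁻¹ * d + (δ₂ - Rs) / δ₂) 0 ^ 2 := by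
  have hu : δ₂⁻¹ * d + (δ₂ - Rs) / δ₂ = (d + δ₂ - Rs) / δ₂ := by field_simp; ring
  rw [hu, bfun]
  rcases lt_or_ge d (Rs - δ₂) with h | h
  · rw [if_pos h, max_eq_right (div_nonpos_of_nonpos_of_nonneg (by linarith) hδ₂.le)]
    simp
  · rw [if_neg (not_lt.mpr h), if_pos hd, max_eq_left (div_nonneg (by linarith) hδ₂.le)]
    field_simp
    ring

lemma bfun_eq_zero_of_lt {Rs δ₂ d : ℝ} (hδ₂ : 0 ≤ δ₂) (hd : Rs < d) : bfun Rs δ₂ d = 0 := by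
  rw [bfun, if_neg (by linarith), if_neg (not_le.mpr hd)]

lemma abs_bfun_le {Rs δ₂ : ℝ} (hδ₂ : 0 < δ₂) (d : ℝ) : |bfun Rs δ₂ d| ≤ 1 := by
  rcases le_or_gt d Rs with h | h
  · rw [bfun_eq_of_le hδ₂ h]
    exact abs_one_sub_max_zero_sq_le (by rw [← sub_nonneg]; field_simp; linarith)
  · simp [bfun_eq_zero_of_lt hδ₂.le h]

lemma abs_Bfun_le {δ₁ d : ℝ} (hδ₁ : 0 < δ₁) (hd : 0 ≤ d) : |Bfun δ₁ d| ≤ 1 := by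
  rw [Bfun_eq hδ₁]
  exact abs_one_sub_max_zero_sq_le (by nlinarith [inv_pos.mpr hδ₁])

lemma exists_hasDerivAt_bfun {Rs δ₂ d : ℝ} (hδ₂ : 0 < δ₂) (hd : d ≠ Rs) :
    ∃ b', HasDerivAt (bfun Rs δ₂) b' d ∧ |b'| ≤ 2 / δ₂ := by
  rcases hd.lt_or_gt with h | h
  · obtain ⟨b', hb', hle⟩ := exists_hasDerivAt_one_sub_max_zero_sq_affine
      (a := δ₂⁻¹) (b := (δ₂ - Rs) / δ₂) (t := d) (by rw [← sub_nonneg]; field_simp; linarith)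
    have heq : bfun Rs δ₂ =ᶠ[𝓝 d] fun s => 1 - max (δ₂⁻¹ * s + (δ₂ - Rs) / δ₂) 0 ^ 2 := by
      filter_upwards [Iio_mem_nhds h] with s hs
      exact bfun_eq_of_le hδ₂ (le_of_lt hs)
    refine ⟨b', hb'.congr_of_eventuallyEq heq, ?_⟩
    rwa [abs_inv, abs_of_pos hδ₂, ← div_eq_mul_inv] at hle
  · have heq : bfun Rs δ₂ =ᶠ[𝓝 d] fun _ => 0 := by
      filter_upwards [Ioi_mem_nhds h] with s hs
      exact bfun_eq_zero_of_lt hδ₂.le hs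
    exact ⟨0, (hasDerivAt_const d 0).congr_of_eventuallyEq heq, by simp; positivity⟩

lemma exists_hasDerivAt_Bfun {δ₁ d : ℝ} (hδ₁ : 0 < δ₁) (hd : 0 ≤ d) :
    ∃ B', HasDerivAt (Bfun δ₁) B' d ∧ |B'| ≤ 2 / δ₁ := by
  obtain ⟨B', hB', hle⟩ := exists_hasDerivAt_one_sub_max_zero_sq_affine
    (a := -δ₁⁻¹) (b := 1) (t := d) (by nlinarith [inv_pos.mpr hδ₁])
  refine ⟨B', hB'.congr_of_eventuallyEq (.of_forall (Bfun_eq hδ₁)), ?_⟩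
  rwa [abs_neg, abs_inv, abs_of_pos hδ₁, ← div_eq_mul_inv] at hle

lemma exists_hasFDerivAt_comp_norm_sub_norm_le {E : Type*} [NormedAddCommGroup E]
    [InnerProductSpace ℝ E] {g : ℝ → ℝ} {g' K : ℝ} {c x : E} (hx : x ≠ c)
    (hg : HasDerivAt g g' ‖x - c‖) (hg' : |g'| ≤ K) :
    ∃ D : E →L[ℝ] ℝ, HasFDerivAt (fun y => g ‖y - c‖) D x ∧ ‖D‖ ≤ K := by
  have hdist : ‖fderiv ℝ (fun y : E => ‖y - c‖) x‖ ≤ 1 := by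
    simpa [dist_eq_norm] using
      norm_fderiv_le_of_lipschitz ℝ (LipschitzWith.dist_left c) (x₀ := x)
  have hdiff : DifferentiableAt ℝ (fun y : E => ‖y - c‖) x :=
    (differentiableAt_id.sub_const c).norm ℝ (sub_ne_zero.mpr hx)
  refine ⟨g' • fderiv ℝ (fun y : E => ‖y - c‖) x, hg.comp_hasFDerivAt x hdiff.hasFDerivAt, ?_⟩
  rw [norm_smul, Real.norm_eq_abs]
  nlinarith [abs_nonneg g', norm_nonneg (fderiv ℝ (fun y : E => ‖y - c‖) x)]

lemma exists_hasFDerivAt_prod_norm_le {ι 𝕜 E : Type*} [Fintype ι] [NontriviallyNormedField 𝕜]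
    [NormedAddCommGroup E] [NormedSpace 𝕜 E] {f : ι → E → 𝕜} {c : ι → ℝ} {x : E}
    (hf : ∀ i, ‖f i x‖ ≤ 1) (hf' : ∀ i, ∃ D : E →L[𝕜] 𝕜, HasFDerivAt (f i) D x ∧ ‖D‖ ≤ c i) :
    ∃ D : E →L[𝕜] 𝕜, HasFDerivAt (fun y => ∏ i, f i y) D x ∧ ‖D‖ ≤ ∑ i, c i := by
  classical
  choose D hD hDc using hf'
  refine ⟨_, HasFDerivAt.finsetProd fun i _ => hD i, ?_⟩
  refine (norm_sum_le _ _).trans (sum_le_sum fun i _ => ?_)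
  have hprod : ‖∏ j ∈ univ.erase i, f j x‖ ≤ 1 := by
    rw [norm_prod]
    exact prod_le_one (fun _ _ => norm_nonneg _) fun j _ => hf j
  calc ‖(∏ j ∈ univ.erase i, f j x) • D i‖
      = ‖∏ j ∈ univ.erase i, f j x‖ * ‖D i‖ := norm_smul _ _
    _ ≤ 1 * c i := mul_le_mul hprod (hDc i) (norm_nonneg _) zero_le_one
    _ = c i := one_mul _

theorem gradient_beta_bound_general (Rs δ₁ δ₂ : ℝ) (hδ₂ : 0 < δ₂) (hδ₁ : 0 < δ₁)
    (F O : Type*) [Fintype F] [Fintype O]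
    (x : EuclideanSpace ℝ (Fin 2)) (p : F → EuclideanSpace ℝ (Fin 2))
    (o : O → EuclideanSpace ℝ (Fin 2))
    (hp : ∀ j : F, x ≠ p j) (hpRs : ∀ j : F, ‖x - p j‖ ≠ Rs)
    (ho : ∀ k : O, x ≠ o k) :
    DifferentiableAt ℝ
      (fun y : EuclideanSpace ℝ (Fin 2) =>
        (∏ j : F, bfun Rs δ₂ ‖y - p j‖) * (∏ k : O, Bfun δ₁ ‖y - o k‖)) x ∧
    ‖gradient (fun y : EuclideanSpace ℝ (Fin 2) =>
        (∏ j : F, bfun Rs δ₂ ‖y - p j‖) * (∏ k : O, Bfun δ₁ ‖y - o k‖)) x‖ ≤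
      (Fintype.card F) * (2/δ₂) + (Fintype.card O) * (2/δ₁) := by
  let φ : F ⊕ O → EuclideanSpace ℝ (Fin 2) → ℝ :=
    Sum.elim (fun j y => bfun Rs δ₂ ‖y - p j‖) (fun k y => Bfun δ₁ ‖y - o k‖)
  let c : F ⊕ O → ℝ := Sum.elim (fun _ => 2 / δ₂) (fun _ => 2 / δ₁)
  have hβ : (fun y : EuclideanSpace ℝ (Fin 2) =>
      (∏ j : F, bfun Rs δ₂ ‖y - p j‖) * (∏ k : O, Bfun δ₁ ‖y - o k‖)) = fun y => ∏ i, φ i y := by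
    funext y
    rw [Fintype.prod_sum_type]
    rfl
  have hφ : ∀ i, ‖φ i x‖ ≤ 1 := by
    rintro (j | k)
    · exact abs_bfun_le hδ₂ _
    · exact abs_Bfun_le hδ₁ (norm_nonneg _)
  have hφ' : ∀ i, ∃ D : EuclideanSpace ℝ (Fin 2) →L[ℝ] ℝ, HasFDerivAt (φ i) D x ∧ ‖D‖ ≤ c i := by
    rintro (j | k)
    · obtain ⟨b', hb', hle⟩ := exists_hasDerivAt_bfun hδ₂ (hpRs j)
      exact exists_hasFDerivAt_comp_norm_sub_norm_le (hp j) hb' hle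
    · obtain ⟨B', hB', hle⟩ := exists_hasDerivAt_Bfun hδ₁ (norm_nonneg (x - o k))
      exact exists_hasFDerivAt_comp_norm_sub_norm_le (ho k) hB' hle
  obtain ⟨D, hD, hDc⟩ := exists_hasFDerivAt_prod_norm_le hφ hφ'
  rw [hβ, gradient, hD.fderiv, LinearIsometryEquiv.norm_map]
  exact ⟨hD.differentiableAt, hDc.trans_eq (by simp [c, Fintype.sum_sum_type])⟩

theorem gradient_beta_bound (Rs δ₁ δ₂ : ℝ) (hδ₂ : 0 < δ₂) (hRs : δ₂ < Rs) (hδ₁ : 0 < δ₁)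
    (F O : Type*) [Fintype F] [Fintype O]
    (x : EuclideanSpace ℝ (Fin 2)) (p : F → EuclideanSpace ℝ (Fin 2))
    (o : O → EuclideanSpace ℝ (Fin 2))
    (hp : ∀ j : F, x ≠ p j) (hpRs : ∀ j : F, ‖x - p j‖ ≠ Rs)
    (ho : ∀ k : O, x ≠ o k) :
    DifferentiableAt ℝ
      (fun y : EuclideanSpace ℝ (Fin 2) =>
        (∏ j : F, bfun Rs δ₂ ‖y - p j‖) * (∏ k : O, Bfun δ₁ ‖y - o k‖)) x ∧
    ‖gradient (fun y : EuclideanSpace ℝ (Fin 2) =>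
        (∏ j : F, bfun Rs δ₂ ‖y - p j‖) * (∏ k : O, Bfun δ₁ ‖y - o k‖)) x‖ ≤
      (Fintype.card F) * (2/δ₂) + (Fintype.card O) * (2/δ₁) :=
  gradient_beta_bound_general Rs δ₁ δ₂ hδ₂ hδ₁ F O x p o hp hpRs ho
end

section
/- The function b is continuous on ℝ, but b is not differentiable at the point d = R_s. -/
/-!
The middle piece of `b` is the parabola `1 - ((d - (R_s - δ₂)) / δ₂)²`, which equals `1` at
`R_s - δ₂` and `0` at `R_s`, so the three pieces glue continuously. At `R_s` the parabola has
slope `-2 / δ₂ ≠ 0`, while `b` vanishes to the right of `R_s`: the one-sided derivatives differ.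
-/

open Filter Set Topology

theorem not_differentiableAt_of_hasDerivWithinAt_Iio_Ioi {F : Type*} [NormedAddCommGroup F]
    [NormedSpace ℝ F] {f : ℝ → F} {a : ℝ} {l r : F} (hl : HasDerivWithinAt f l (Iio a) a)
    (hr : HasDerivWithinAt f r (Ioi a) a) (hlr : l ≠ r) : ¬DifferentiableAt ℝ f a := fun hf =>
  hlr <| ((uniqueDiffWithinAt_Iio a).eq_deriv _ hl hf.hasDerivAt.hasDerivWithinAt).trans
    ((uniqueDiffWithinAt_Ioi a).eq_deriv _ hf.hasDerivAt.hasDerivWithinAt hr)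

variable {Rs δ₂ : ℝ}

noncomputable def bfunMid (Rs δ₂ : ℝ) (d : ℝ) : ℝ :=
  -(1/δ₂^2) * (d + 2*δ₂ - Rs)^2 + (2/δ₂) * (d + 2*δ₂ - Rs)

theorem bfun_eq_ite_bfunMid :
    bfun Rs δ₂ = fun d => if d < Rs - δ₂ then 1 else if d ≤ Rs then bfunMid Rs δ₂ d else 0 :=
  rfl

theorem bfunMid_eq (hδ₂ : δ₂ ≠ 0) (d : ℝ) : bfunMid Rs δ₂ d = 1 - ((d - (Rs - δ₂)) / δ₂) ^ 2 := by
  unfold bfunMid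
  field_simp
  ring

theorem bfunMid_sub_self (hδ₂ : δ₂ ≠ 0) : bfunMid Rs δ₂ (Rs - δ₂) = 1 := by
  simp [bfunMid_eq hδ₂]

theorem bfunMid_self (hδ₂ : δ₂ ≠ 0) : bfunMid Rs δ₂ Rs = 0 := by
  simp [bfunMid_eq hδ₂, hδ₂]

theorem continuous_bfunMid : Continuous (bfunMid Rs δ₂) := by
  unfold bfunMid
  fun_prop

theorem hasDerivAt_bfunMid_self (hδ₂ : δ₂ ≠ 0) : HasDerivAt (bfunMid Rs δ₂) (-2 / δ₂) Rs := by
  have h := ((hasDerivAt_id Rs).add_const (2 * δ₂)).sub_const Rs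
  refine (((h.pow 2).const_mul (-(1 / δ₂ ^ 2))).add (h.const_mul (2 / δ₂))).congr_deriv ?_
  simp only [id]
  field_simp
  ring

theorem continuous_bfun (hδ₂ : 0 < δ₂) : Continuous (bfun Rs δ₂) := by
  have hsplit : bfun Rs δ₂ = fun d =>
      if Rs - δ₂ ≤ d then (if d ≤ Rs then bfunMid Rs δ₂ d else 0) else 1 := by
    funext d
    simp only [bfun_eq_ite_bfunMid, ← not_lt]
    split_ifs <;> rfl
  rw [hsplit]
  refine Continuous.if_le ?_ continuous_const continuous_const continuous_id ?_
  · exact continuous_bfunMid.if_le continuous_const continuous_id continuous_const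
      fun d hd => hd ▸ bfunMid_self hδ₂.ne'
  · rintro d rfl
    simp [(sub_le_self_iff Rs).2 hδ₂.le, bfunMid_sub_self hδ₂.ne']

theorem bfun_self (hδ₂ : 0 < δ₂) : bfun Rs δ₂ Rs = 0 := by
  simp [bfun_eq_ite_bfunMid, hδ₂.le, bfunMid_self hδ₂.ne']

theorem hasDerivWithinAt_bfun_Ioi (hδ₂ : 0 < δ₂) :
    HasDerivWithinAt (bfun Rs δ₂) 0 (Ioi Rs) Rs := by
  refine (hasDerivWithinAt_const Rs _ (0 : ℝ)).congr_of_eventuallyEq ?_ (bfun_self hδ₂)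
  filter_upwards [self_mem_nhdsWithin] with d (hd : Rs < d)
  simp [bfun_eq_ite_bfunMid, hd.not_ge, (show ¬d < Rs - δ₂ by linarith)]

theorem hasDerivWithinAt_bfun_Iio (hδ₂ : 0 < δ₂) :
    HasDerivWithinAt (bfun Rs δ₂) (-2 / δ₂) (Iio Rs) Rs := by
  refine (hasDerivAt_bfunMid_self hδ₂.ne').hasDerivWithinAt.congr_of_eventuallyEq ?_
    (by rw [bfun_self hδ₂, bfunMid_self hδ₂.ne'])
  filter_upwards [Ioo_mem_nhdsLT (show Rs - δ₂ < Rs by linarith)] with d hd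
  simp [bfun_eq_ite_bfunMid, hd.1.not_gt, hd.2.le]

theorem bfun_continuous_not_differentiableAt_general (Rs δ₂ : ℝ) (hδ₂ : 0 < δ₂) :
    Continuous (bfun Rs δ₂) ∧ ¬ DifferentiableAt ℝ (bfun Rs δ₂) Rs :=
  ⟨continuous_bfun hδ₂, not_differentiableAt_of_hasDerivWithinAt_Iio_Ioi
    (hasDerivWithinAt_bfun_Iio hδ₂) (hasDerivWithinAt_bfun_Ioi hδ₂) (by simp [hδ₂.ne'])⟩

theorem bfun_continuous_not_differentiableAt (Rs δ₂ : ℝ) (hδ₂ : 0 < δ₂) (hRs : δ₂ < Rs) :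
    Continuous (bfun Rs δ₂) ∧ ¬ DifferentiableAt ℝ (bfun Rs δ₂) Rs :=
  bfun_continuous_not_differentiableAt_general Rs δ₂ hδ₂
end
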